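/- arXiv:1603.04996 — 2 statements merged into one kernel-verified Lean document; each statement's English description precedes it below -/
import Mathlib

section
/- Let G be a connected simple graph on a finite vertex set V and let D ⊆ V be a dominating set of G. Suppose that for any i, j ∈ D there exists a walk i = i₀, i₁, …, i_p = j in G such that between any two consecutive occurrences of members of D along the walk there is at most one vertex not in D (formally: whenever i_s, i_t ∈ D with s < t and i_k ∉ D for s < k < t, then t ≤ s + 2). Then the spanning subgraph G_D of G, whose edges are the edges of G incident to D, is connected. -/
open SimpleGraph

variable {V : Type*}

/-- Spanning subgraph of `G` whose edges are the edges of `G` with at least one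
endpoint in `D` (edge set `I_D(E)`). -/
def incSub (G : SimpleGraph V) (D : Set V) : SimpleGraph V where
  Adj u v := G.Adj u v ∧ (u ∈ D ∨ v ∈ D)
  symm := ⟨fun u v h => ⟨h.1.symm, h.2.symm⟩⟩
  loopless := ⟨fun v h => G.loopless.irrefl v h.1⟩

/-- `D` is a dominating set of `G`. -/
def Dominating (G : SimpleGraph V) (D : Set V) : Prop :=
  ∀ v : V, v ∈ D ∨ ∃ u ∈ D, G.Adj v u

/-- Any two members of `D` are joined by a walk in `G` such that whenever
`i_s, i_t ∈ D`, `s < t`, and no vertex strictly between them lies in `D`,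
it holds that `t = s + 2`. -/
def RelaxedConnEq (G : SimpleGraph V) (D : Set V) : Prop :=
  ∀ i ∈ D, ∀ j ∈ D, ∃ (p : ℕ) (f : ℕ → V), f 0 = i ∧ f p = j ∧
    (∀ k, k < p → G.Adj (f k) (f (k + 1))) ∧
    (∀ s t, s < t → t ≤ p → f s ∈ D → f t ∈ D →
      (∀ k, s < k → k < t → f k ∉ D) → t = s + 2)

/-- Any two members of `D` are joined by a walk in `G` on which between any two
consecutive members of `D` there is at most one vertex not in `D`. -/
def RelaxedConnLe (G : SimpleGraph V) (D : Set V) : Prop :=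
  ∀ i ∈ D, ∀ j ∈ D, ∃ (p : ℕ) (f : ℕ → V), f 0 = i ∧ f p = j ∧
    (∀ k, k < p → G.Adj (f k) (f (k + 1))) ∧
    (∀ s t, s < t → t ≤ p → f s ∈ D → f t ∈ D →
      (∀ k, s < k → k < t → f k ∉ D) → t ≤ s + 2)

/-! Every vertex is joined in `G_D` to a member of `D` by domination, so it suffices to connect
members of `D`. Along a walk as in the hypothesis, consecutive members of `D` are at distance one
or two, and every walk edge incident to one of them is an edge of `G_D`. -/

theorem Nat.exists_lt_forall_not_of_pos {P : ℕ → Prop} [DecidablePred P] (h0 : P 0) {t : ℕ}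
    (ht : 0 < t) : ∃ s < t, P s ∧ ∀ k, s < k → k < t → ¬ P k :=
  ⟨Nat.findGreatest P (t - 1), by have := Nat.findGreatest_le (P := P) (t - 1); omega,
    Nat.findGreatest_spec (Nat.zero_le _) h0,
    fun _ hsk hkt => Nat.findGreatest_is_greatest hsk (by omega)⟩

namespace incSub

variable {G : SimpleGraph V} {D : Set V} {u v : V}

theorem adj_of_mem_left (h : G.Adj u v) (hu : u ∈ D) : (incSub G D).Adj u v := ⟨h, Or.inl hu⟩

theorem adj_of_mem_right (h : G.Adj u v) (hv : v ∈ D) : (incSub G D).Adj u v := ⟨h, Or.inr hv⟩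

theorem exists_mem_reachable (hdom : Dominating G D) (v : V) :
    ∃ d ∈ D, (incSub G D).Reachable v d := by
  rcases hdom v with hv | ⟨u, hu, hvu⟩
  · exact ⟨v, hv, .refl v⟩
  · exact ⟨u, hu, (adj_of_mem_right hvu hu).reachable⟩

theorem reachable_of_gap_le_two {f : ℕ → V} {s t : ℕ}
    (hadj : ∀ k, s ≤ k → k < t → G.Adj (f k) (f (k + 1)))
    (hs : f s ∈ D) (ht : f t ∈ D) (hst : s < t) (hts : t ≤ s + 2) :
    (incSub G D).Reachable (f s) (f t) := by
  have e₁ : (incSub G D).Adj (f s) (f (s + 1)) := adj_of_mem_left (hadj s le_rfl hst) hs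
  obtain rfl | rfl : t = s + 1 ∨ t = s + 2 := by omega
  · exact e₁.reachable
  · exact e₁.reachable.trans (adj_of_mem_right (hadj (s + 1) (by omega) (by omega)) ht).reachable

theorem reachable_of_walk {f : ℕ → V} {p : ℕ} (hadj : ∀ k, k < p → G.Adj (f k) (f (k + 1)))
    (hgap : ∀ s t, s < t → t ≤ p → f s ∈ D → f t ∈ D →
      (∀ k, s < k → k < t → f k ∉ D) → t ≤ s + 2)
    (h0 : f 0 ∈ D) {t : ℕ} (htp : t ≤ p) (ht : f t ∈ D) :
    (incSub G D).Reachable (f 0) (f t) := by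
  classical
  induction t using Nat.strong_induction_on with
  | _ t ih =>
    rcases Nat.eq_zero_or_pos t with rfl | hpos
    · exact .refl _
    obtain ⟨s, hst, hs, hbetween⟩ :=
      Nat.exists_lt_forall_not_of_pos (P := fun k => f k ∈ D) h0 hpos
    exact (ih s hst (by omega) hs).trans <|
      reachable_of_gap_le_two (fun k _ hk => hadj k (by omega)) hs ht hst
        (hgap s t hst htp hs ht hbetween)

theorem reachable_of_relaxedConnLe (hrc : RelaxedConnLe G D) {i j : V} (hi : i ∈ D)
    (hj : j ∈ D) :
    (incSub G D).Reachable i j := by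
  obtain ⟨p, f, rfl, rfl, hadj, hgap⟩ := hrc i hi j hj
  exact reachable_of_walk hadj hgap hi le_rfl hj

end incSub

theorem stmt_2_general (G : SimpleGraph V) (hG : G.Connected) (D : Set V)
    (hdom : Dominating G D) (hrc : RelaxedConnLe G D) :
    (incSub G D).Connected := by
  have := hG.nonempty
  refine (connected_iff _).2 ⟨fun u v => ?_, inferInstance⟩
  obtain ⟨du, hdu, hu⟩ := incSub.exists_mem_reachable hdom u
  obtain ⟨dv, hdv, hv⟩ := incSub.exists_mem_reachable hdom v
  exact hu.trans ((incSub.reachable_of_relaxedConnLe hrc hdu hdv).trans hv.symm)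

theorem stmt_2 [Fintype V] (G : SimpleGraph V) (hG : G.Connected) (D : Set V)
    (hdom : Dominating G D) (hrc : RelaxedConnLe G D) :
    (incSub G D).Connected :=
  stmt_2_general G hG D hdom hrc
end

section
/- Let G be a connected simple graph on V, D ⊆ V, and suppose (V₀, E₀) is a connected component of the spanning subgraph (V, I_D(E)) with V₀ ≠ V. Let Ẽ = { {u,v} ∈ E(G) : u ∈ V₀, v ∉ V₀ }. Then Ẽ is nonempty and for every edge {u,v} ∈ Ẽ, neither u nor v belongs to D. -/
open SimpleGraph

variable {V : Type*}

lemma SimpleGraph.Connected.exists_adj_mem_notMem {G : SimpleGraph V} (hG : G.Connected)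
    {S : Set V} {a : V} (ha : a ∈ S) (hS : S ≠ Set.univ) :
    ∃ u v : V, G.Adj u v ∧ u ∈ S ∧ v ∉ S := by
  obtain ⟨b, hb⟩ := (Set.ne_univ_iff_exists_notMem S).1 hS
  obtain ⟨d, -, hd⟩ := (hG a b).some.exists_boundary_dart S ha hb
  exact ⟨d.fst, d.snd, d.adj, hd⟩

lemma incSub_connectedComponentMk_eq_of_adj {G : SimpleGraph V} {D : Set V} {u v : V}
    (huv : G.Adj u v) (hD : u ∈ D ∨ v ∈ D) :
    (incSub G D).connectedComponentMk u = (incSub G D).connectedComponentMk v :=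
  ConnectedComponent.connectedComponentMk_eq_of_adj (show (incSub G D).Adj u v from ⟨huv, hD⟩)

lemma notMem_of_adj_of_incSub_connectedComponentMk_ne {G : SimpleGraph V} {D : Set V}
    {u v : V} (huv : G.Adj u v)
    (hne : (incSub G D).connectedComponentMk u ≠ (incSub G D).connectedComponentMk v) :
    u ∉ D ∧ v ∉ D :=
  not_or.1 (mt (incSub_connectedComponentMk_eq_of_adj huv) hne)

theorem stmt_16_general (G : SimpleGraph V) (hG : G.Connected) (D : Set V)
    (V0 : Set V) (c : (incSub G D).ConnectedComponent)
    (hV0 : V0 = {v : V | (incSub G D).connectedComponentMk v = c})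
    (hne : V0 ≠ Set.univ) :
    (∃ u v : V, G.Adj u v ∧ u ∈ V0 ∧ v ∉ V0) ∧
    (∀ u v : V, G.Adj u v → u ∈ V0 → v ∉ V0 → u ∉ D ∧ v ∉ D) := by
  subst hV0
  obtain ⟨a, ha⟩ := c.exists_rep
  refine ⟨hG.exists_adj_mem_notMem ha hne, fun u v huv hu hv => ?_⟩
  exact notMem_of_adj_of_incSub_connectedComponentMk_ne huv fun h => hv (h.symm.trans hu)

theorem stmt_16 [Fintype V] (G : SimpleGraph V) (hG : G.Connected) (D : Set V)
    (V0 : Set V) (c : (incSub G D).ConnectedComponent)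
    (hV0 : V0 = {v : V | (incSub G D).connectedComponentMk v = c})
    (hne : V0 ≠ Set.univ) :
    (∃ u v : V, G.Adj u v ∧ u ∈ V0 ∧ v ∉ V0) ∧
    (∀ u v : V, G.Adj u v → u ∈ V0 → v ∉ V0 → u ∉ D ∧ v ∉ D) :=
  stmt_16_general G hG D V0 c hV0 hne
end
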